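/- Let L/K be a finite separable totally ramified extension of local fields of degree n, let v: L* → ℤ/nℤ be the map x ↦ (v_L(x) mod n), and let d̄ = (−d_{L/K} − 1 mod nℤ). Let V be the kernel of the trace map Tr_{L/K}: L → K. Then {v(x) : x ∈ V, x ≠ 0} = (ℤ/nℤ) \ {d̄}; that is, exactly one residue class modulo n does not occur as the valuation of a non-zero trace-zero element of L. -/

import Mathlib

/-- A local field structure on a field `K`: a normalized (surjective) discrete
valuation `v : K* ↠ ℤ`, extended by a junk value at `0`, with respect to which
`K` is complete. -/
structure LocalFieldStruct (K : Type) [Field K] where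
  /-- the valuation; its value at `0` is irrelevant -/
  v : K → ℤ
  v_mul : ∀ x y : K, x ≠ 0 → y ≠ 0 → v (x * y) = v x + v y
  v_add : ∀ x y : K, x ≠ 0 → y ≠ 0 → x + y ≠ 0 → min (v x) (v y) ≤ v (x + y)
  v_surj : ∀ n : ℤ, ∃ x : K, x ≠ 0 ∧ v x = n
  complete : ∀ a : ℕ → K,
      (∀ N : ℤ, ∃ M : ℕ, ∀ m : ℕ, M ≤ m → ∀ n : ℕ, M ≤ n →
        a m = a n ∨ N ≤ v (a m - a n)) →
      ∃ x : K, ∀ N : ℤ, ∃ M : ℕ, ∀ n : ℕ, M ≤ n → a n = x ∨ N ≤ v (a n - x)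

namespace LocalFieldStruct

variable {K L : Type} [Field K] [Field L]

/-- `x` lies in the valuation ring `O_K`. -/
def Integral (w : LocalFieldStruct K) (x : K) : Prop :=
  x = 0 ∨ 0 ≤ w.v x

/-- The residue characteristic of `K` is the prime `p`, i.e. `p` maps to `0`
in the residue field of the valuation ring. -/
def ResidueCharP (w : LocalFieldStruct K) (p : ℕ) : Prop :=
  p.Prime ∧ ((p : K) = 0 ∨ 0 < w.v (p : K))

/-- `K` has mixed characteristic `(0, p)`: `K` has characteristic `0` and its
residue field has characteristic `p > 0`. -/
def MixedChar (w : LocalFieldStruct K) (p : ℕ) : Prop :=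
  CharZero K ∧ p.Prime ∧ 0 < w.v (p : K)

/-- `e` is the ramification index `e_{L/K}`: the valuation of `L` restricted to
`K` is `e` times the valuation of `K`. -/
def IsRamificationIndex (wK : LocalFieldStruct K) (wL : LocalFieldStruct L)
    [Algebra K L] (e : ℕ) : Prop :=
  0 < e ∧ ∀ x : K, x ≠ 0 → wL.v (algebraMap K L x) = (e : ℤ) * wK.v x

/-- `d` is the valuation `d_{L/K}` of the different of `L/K`, characterized by
`Tr_{L/K}(𝔭_L^i) ⊆ O_K ↔ i ≥ -d` for all `i : ℤ`. -/
def IsDifferentVal (wK : LocalFieldStruct K) (wL : LocalFieldStruct L)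
    [Algebra K L] (d : ℤ) : Prop :=
  ∀ i : ℤ,
    (∀ x : L, (x ≠ 0 → i ≤ wL.v x) → wK.Integral (Algebra.trace K L x)) ↔ -d ≤ i

end LocalFieldStruct

/-- `x` is a normal basis generator of `L` over `K`: the Galois conjugates of
`x` form a `K`-basis of `L`. -/
def IsNormalElement (K : Type) [Field K] {L : Type} [Field L] [Algebra K L]
    (x : L) : Prop :=
  LinearIndependent K (fun σ : L ≃ₐ[K] L => σ x) ∧
    Submodule.span K (Set.range fun σ : L ≃ₐ[K] L => σ x) = ⊤

/-- The valuation criterion `VC(L/K)`, for an extension with ramification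
index `e` and different of valuation `d`: every nonzero `x ∈ L` with
`v_L(x) ≡ -d-1 (mod e)` is a normal basis generator of `L` over `K`. -/
def VC (K : Type) [Field K] {L : Type} [Field L] [Algebra K L]
    (wL : LocalFieldStruct L) (e : ℕ) (d : ℤ) : Prop :=
  ∀ x : L, x ≠ 0 → Int.ModEq (e : ℤ) (wL.v x) (-d - 1) → IsNormalElement K x

/-!
Write `𝔭^i` for the elements of valuation at least `i`. Since `e_{L/K} = n`, scaling by
elements of `K` turns the defining property of `d` into `Tr(𝔭_L^i) = 𝔭_K^s` with
`s = ⌊(i + d) / n⌋`. If `m ≢ -d - 1 (mod n)` then `m` and `m + 1` give the same `s`, so an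
element of valuation `m` can be corrected by an element of `𝔭_L^(m+1)` to have trace zero.
Conversely, as the residue fields of `L` and `K` agree, `𝔭_L^(-d-1) = K x + 𝔭_L^(-d)` for any
`x` of valuation `-d - 1`; if `Tr x = 0` this gives `Tr(𝔭_L^(-d-1)) ⊆ O_K`, contradicting the
definition of `d`.
-/

theorem Int.mul_add_emod_of_lt {n a i : ℤ} (hi : 0 ≤ i) (hin : i < n) :
    (n * a + i) % n = i := by
  rw [Int.mul_add_emod_self_left, Int.emod_eq_of_lt hi hin]

namespace LocalFieldStruct

section Valuation

variable {K : Type} [Field K] (w : LocalFieldStruct K)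

/-- `x ∈ 𝔭^c`. -/
def ValGE (c : ℤ) (x : K) : Prop :=
  x = 0 ∨ c ≤ w.v x

variable {w}

theorem v_one : w.v 1 = 0 := by
  have := w.v_mul 1 1 one_ne_zero one_ne_zero
  rw [mul_one] at this
  omega

theorem v_neg {x : K} (hx : x ≠ 0) : w.v (-x) = w.v x := by
  have h := w.v_mul (-1) (-1) (by norm_num) (by norm_num)
  rw [neg_one_mul, neg_neg, v_one] at h
  rw [← neg_one_mul, w.v_mul _ _ (by norm_num) hx]
  omega

theorem v_inv {x : K} (hx : x ≠ 0) : w.v x⁻¹ = -w.v x := by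
  have := w.v_mul x x⁻¹ hx (inv_ne_zero hx)
  rw [mul_inv_cancel₀ hx, v_one] at this
  omega

theorem v_pow {x : K} (hx : x ≠ 0) (k : ℕ) : w.v (x ^ k) = k * w.v x := by
  induction k with
  | zero => simp [v_one]
  | succ k ih =>
    rw [pow_succ, w.v_mul _ _ (pow_ne_zero k hx) hx, ih]
    push_cast
    ring

theorem valGE_zero (c : ℤ) : w.ValGE c 0 :=
  Or.inl rfl

theorem valGE_v (x : K) : w.ValGE (w.v x) x :=
  Or.inr le_rfl

theorem ValGE.mono {c c' : ℤ} {x : K} (hx : w.ValGE c x) (h : c' ≤ c) : w.ValGE c' x :=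
  hx.imp_right h.trans

theorem ValGE.neg {c : ℤ} {x : K} (hx : w.ValGE c x) : w.ValGE c (-x) := by
  rcases eq_or_ne x 0 with rfl | hx0
  · simpa using hx
  · exact Or.inr ((v_neg hx0).symm ▸ hx.resolve_left hx0)

theorem ValGE.add {c : ℤ} {x y : K} (hx : w.ValGE c x) (hy : w.ValGE c y) :
    w.ValGE c (x + y) := by
  rcases eq_or_ne x 0 with rfl | hx0
  · simpa using hy
  rcases eq_or_ne y 0 with rfl | hy0
  · simpa using hx
  rcases eq_or_ne (x + y) 0 with hxy | hxy
  · exact Or.inl hxy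
  · exact Or.inr ((le_min (hx.resolve_left hx0) (hy.resolve_left hy0)).trans
      (w.v_add x y hx0 hy0 hxy))

theorem ValGE.mul {a b : ℤ} {x y : K} (hx : w.ValGE a x) (hy : w.ValGE b y) :
    w.ValGE (a + b) (x * y) := by
  rcases eq_or_ne x 0 with rfl | hx0
  · simpa using valGE_zero (w := w) (a + b)
  rcases eq_or_ne y 0 with rfl | hy0
  · simpa using valGE_zero (w := w) (a + b)
  rw [ValGE, w.v_mul x y hx0 hy0]
  exact Or.inr (add_le_add (hx.resolve_left hx0) (hy.resolve_left hy0))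

theorem valGE_sum {ι : Type*} {c : ℤ} (s : Finset ι) {f : ι → K}
    (hf : ∀ i ∈ s, w.ValGE c (f i)) : w.ValGE c (∑ i ∈ s, f i) := by
  classical
  induction s using Finset.induction_on with
  | empty => exact valGE_zero c
  | insert a s ha ih =>
    rw [Finset.sum_insert ha]
    exact (hf a (s.mem_insert_self a)).add (ih fun i hi => hf i (Finset.mem_insert_of_mem hi))

theorem add_ne_zero_of_valGE {x y : K} (hx : x ≠ 0) (hy : w.ValGE (w.v x + 1) y) :
    x + y ≠ 0 := by
  intro hxy
  obtain rfl : y = -x := eq_neg_of_add_eq_zero_right hxy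
  have := hy.resolve_left (neg_ne_zero.mpr hx)
  rw [v_neg hx] at this
  omega

theorem v_add_of_valGE {x y : K} (hx : x ≠ 0) (hy : w.ValGE (w.v x + 1) y) :
    w.v (x + y) = w.v x := by
  have hxy := add_ne_zero_of_valGE hx hy
  rcases eq_or_ne y 0 with rfl | hy0
  · rw [add_zero]
  have hy' := hy.resolve_left hy0
  have hle := w.v_add x y hx hy0 hxy
  have hge := w.v_add (x + y) (-y) hxy (neg_ne_zero.mpr hy0) (by simpa using hx)
  rw [v_neg hy0, add_neg_cancel_right] at hge
  omega

theorem valGE_of_valGE_sum {ι : Type*} {c : ℤ} (s : Finset ι) {f : ι → K}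
    (hinj : ∀ i ∈ s, ∀ j ∈ s, f i ≠ 0 → f j ≠ 0 → w.v (f i) = w.v (f j) → i = j)
    (hsum : w.ValGE c (∑ i ∈ s, f i)) : ∀ i ∈ s, w.ValGE c (f i) := by
  classical
  by_contra! hbad
  set T := s.filter fun i => ¬ w.ValGE c (f i)
  obtain ⟨i₀, hi₀T, hmin⟩ := T.exists_min_image (fun i => w.v (f i)) <| by
    obtain ⟨i, hi, hic⟩ := hbad
    exact ⟨i, Finset.mem_filter.mpr ⟨hi, hic⟩⟩
  obtain ⟨hi₀, hi₀c⟩ := Finset.mem_filter.mp hi₀T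
  have hf₀ : f i₀ ≠ 0 := fun h => hi₀c (Or.inl h)
  have hlt : w.v (f i₀) < c := by
    by_contra! h
    exact hi₀c (Or.inr h)
  have hrest : w.ValGE (w.v (f i₀) + 1) (∑ j ∈ s.erase i₀, f j) := by
    refine valGE_sum _ fun j hj => ?_
    obtain ⟨hji₀, hj⟩ := Finset.mem_erase.mp hj
    rcases eq_or_ne (f j) 0 with hfj | hfj
    · exact Or.inl hfj
    by_cases hjc : w.ValGE c (f j)
    · exact Or.inr (by have := hjc.resolve_left hfj; omega)
    · have hle := hmin j (Finset.mem_filter.mpr ⟨hj, hjc⟩)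
      have hne : w.v (f i₀) ≠ w.v (f j) := fun h => hji₀ (hinj i₀ hi₀ j hj hf₀ hfj h).symm
      exact Or.inr (by omega)
  rw [← Finset.add_sum_erase s f hi₀] at hsum
  have := hsum.resolve_left (add_ne_zero_of_valGE hf₀ hrest)
  rw [v_add_of_valGE hf₀ hrest] at this
  omega

end Valuation

section Extension

variable {K L : Type} [Field K] [Field L] [Algebra K L]
  {wK : LocalFieldStruct K} {wL : LocalFieldStruct L} {n : ℕ}

theorem IsRamificationIndex.v_smul (htot : IsRamificationIndex wK wL n) {a : K} {x : L}
    (ha : a ≠ 0) (hx : x ≠ 0) : wL.v (a • x) = n * wK.v a + wL.v x := by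
  rw [Algebra.smul_def, wL.v_mul _ _ ((map_ne_zero _).mpr ha) hx, htot.2 a ha]

theorem IsRamificationIndex.valGE_smul (htot : IsRamificationIndex wK wL n) {a b : ℤ}
    {c : K} {x : L} (hc : wK.ValGE a c) (hx : wL.ValGE b x) :
    wL.ValGE (n * a + b) (c • x) := by
  rcases eq_or_ne c 0 with rfl | hc0
  · simpa using valGE_zero (w := wL) _
  rcases eq_or_ne x 0 with rfl | hx0
  · simpa using valGE_zero (w := wL) _
  refine Or.inr ?_
  rw [htot.v_smul hc0 hx0]
  have := mul_le_mul_of_nonneg_left (hc.resolve_left hc0) (Int.natCast_nonneg n)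
  linarith [hx.resolve_left hx0]

theorem IsRamificationIndex.v_smul_pow (htot : IsRamificationIndex wK wL n) {π : L}
    (hπ0 : π ≠ 0) (hπ : wL.v π = 1) {a : K} (ha : a ≠ 0) (i : ℕ) :
    wL.v (a • π ^ i) = n * wK.v a + i := by
  rw [htot.v_smul ha (pow_ne_zero i hπ0), v_pow hπ0, hπ, mul_one]

/-- `v(g πⁱ) ≡ i (mod n)`. -/
theorem IsRamificationIndex.eq_of_v_smul_pow_eq (htot : IsRamificationIndex wK wL n) {π : L}
    (hπ0 : π ≠ 0) (hπ : wL.v π = 1) (g : Fin n → K) (i j : Fin n)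
    (hi : g i • π ^ (i : ℕ) ≠ 0) (hj : g j • π ^ (j : ℕ) ≠ 0)
    (h : wL.v (g i • π ^ (i : ℕ)) = wL.v (g j • π ^ (j : ℕ))) : i = j := by
  rw [htot.v_smul_pow hπ0 hπ (left_ne_zero_of_smul hi),
    htot.v_smul_pow hπ0 hπ (left_ne_zero_of_smul hj)] at h
  have := congrArg (· % (n : ℤ)) h
  simp only [Int.mul_add_emod_of_lt (Int.natCast_nonneg _) (Int.ofNat_lt.mpr i.isLt),
    Int.mul_add_emod_of_lt (Int.natCast_nonneg _) (Int.ofNat_lt.mpr j.isLt)] at this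
  exact Fin.ext (by exact_mod_cast this)

theorem IsRamificationIndex.linearIndependent_pow (htot : IsRamificationIndex wK wL n)
    {π : L} (hπ0 : π ≠ 0) (hπ : wL.v π = 1) :
    LinearIndependent K fun i : Fin n => π ^ (i : ℕ) := by
  rw [Fintype.linearIndependent_iff]
  intro g hg i
  by_contra hgi
  have hne : g i • π ^ (i : ℕ) ≠ 0 := smul_ne_zero hgi (pow_ne_zero _ hπ0)
  have hterm := valGE_of_valGE_sum (c := wL.v (g i • π ^ (i : ℕ)) + 1) Finset.univ
    (fun i _ j _ => htot.eq_of_v_smul_pow_eq hπ0 hπ g i j) (hg ▸ valGE_zero _) i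
    (Finset.mem_univ i)
  have := hterm.resolve_left hne
  omega

/-- `O_L = O_K + 𝔭_L`: a totally ramified extension has trivial residue field extension. -/
theorem IsRamificationIndex.exists_sub_algebraMap_valGE_one (hn : n = Module.finrank K L)
    (htot : IsRamificationIndex wK wL n) {u : L} (hu : wL.ValGE 0 u) :
    ∃ b : K, wL.ValGE 1 (u - algebraMap K L b) := by
  classical
  obtain ⟨π, hπ0, hπ⟩ := wL.v_surj 1
  have : Nonempty (Fin n) := ⟨⟨0, htot.1⟩⟩
  let B := basisOfLinearIndependentOfCardEqFinrank (htot.linearIndependent_pow hπ0 hπ)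
    (by simp [hn])
  set g := B.repr u
  have hB : ⇑B = fun i : Fin n => π ^ (i : ℕ) :=
    coe_basisOfLinearIndependentOfCardEqFinrank _ _
  have hu' : u = ∑ i, g i • π ^ (i : ℕ) := by
    conv_lhs => rw [← B.sum_repr u]
    simp only [hB, g]
  have hterms := valGE_of_valGE_sum Finset.univ
    (fun i _ j _ => htot.eq_of_v_smul_pow_eq hπ0 hπ g i j) (hu' ▸ hu)
  let i₀ : Fin n := ⟨0, htot.1⟩
  refine ⟨g i₀, ?_⟩
  have hsub : u - algebraMap K L (g i₀) = ∑ i ∈ Finset.univ.erase i₀, g i • π ^ (i : ℕ) := by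
    rw [hu', ← Finset.add_sum_erase _ _ (Finset.mem_univ i₀), Algebra.algebraMap_eq_smul_one]
    simp [i₀]
  rw [hsub]
  refine valGE_sum _ fun i hi => ?_
  rcases eq_or_ne (g i) 0 with hgi | hgi
  · simpa [hgi] using valGE_zero (w := wL) 1
  have hnonneg := (hterms i (Finset.mem_univ i)).resolve_left
    (smul_ne_zero hgi (pow_ne_zero _ hπ0))
  rw [htot.v_smul_pow hπ0 hπ hgi] at hnonneg
  have hi₀ : (1 : ℤ) ≤ (i : ℕ) := by
    exact_mod_cast Nat.pos_of_ne_zero fun h => Finset.ne_of_mem_erase hi (Fin.ext h)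
  have hin : ((i : ℕ) : ℤ) < n := by exact_mod_cast i.isLt
  have hv : 0 ≤ wK.v (g i) := by
    by_contra! h
    nlinarith
  refine Or.inr ?_
  rw [htot.v_smul_pow hπ0 hπ hgi]
  nlinarith

theorem IsRamificationIndex.exists_sub_smul_valGE (hn : n = Module.finrank K L)
    (htot : IsRamificationIndex wK wL n) {x z : L} (hx : x ≠ 0) (hz : wL.ValGE (wL.v x) z) :
    ∃ b : K, wL.ValGE (wL.v x + 1) (z - b • x) := by
  have hu : wL.ValGE 0 (z * x⁻¹) := by
    simpa [v_inv hx] using hz.mul (valGE_v x⁻¹)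
  obtain ⟨b, hb⟩ := htot.exists_sub_algebraMap_valGE_one hn hu
  refine ⟨b, ?_⟩
  have hzx : z - b • x = (z * x⁻¹ - algebraMap K L b) * x := by
    rw [Algebra.smul_def]
    field_simp
  rw [hzx, add_comm]
  exact hb.mul (valGE_v x)

theorem IsDifferentVal.integral_trace {d : ℤ} (hd : IsDifferentVal wK wL d) {i : ℤ}
    (hi : -d ≤ i) {x : L} (hx : wL.ValGE i x) : wK.Integral (Algebra.trace K L x) :=
  (hd i).mpr hi x hx.resolve_left

/-- `Tr(𝔭_L^i) ⊆ 𝔭_K^s` for `n s ≤ i + d`. -/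
theorem IsDifferentVal.valGE_trace {d : ℤ} (hd : IsDifferentVal wK wL d)
    (htot : IsRamificationIndex wK wL n) {i s : ℤ} (h : n * s ≤ i + d) {x : L}
    (hx : wL.ValGE i x) : wK.ValGE s (Algebra.trace K L x) := by
  obtain ⟨c, hc0, hcv⟩ := wK.v_surj s
  have hcx : wL.ValGE (i - n * s) (c⁻¹ • x) :=
    (htot.valGE_smul (valGE_v c⁻¹) hx).mono (by rw [v_inv hc0, hcv]; linarith)
  have htr : wK.ValGE 0 (c⁻¹ * Algebra.trace K L x) := by
    have := hd.integral_trace (by linarith) hcx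
    rwa [map_smul, smul_eq_mul] at this
  have := (valGE_v c).mul htr
  rwa [mul_inv_cancel_left₀ hc0, hcv, add_zero] at this

/-- `𝔭_K^s ⊆ Tr(𝔭_L^i)` for `i + d < n (s + 1)`. -/
theorem IsDifferentVal.exists_valGE_trace_eq {d : ℤ} (hd : IsDifferentVal wK wL d)
    (htot : IsRamificationIndex wK wL n) {i s : ℤ} (h : i + d < n * (s + 1)) {t : K}
    (ht : wK.ValGE s t) : ∃ y : L, wL.ValGE i y ∧ Algebra.trace K L y = t := by
  obtain ⟨z, hz, htz⟩ : ∃ z : L, wL.ValGE (i - n * (s + 1)) z ∧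
      ¬ wK.Integral (Algebra.trace K L z) := by
    by_contra! hall
    have := (hd _).mp fun z hz => hall z (or_iff_not_imp_left.mpr hz)
    linarith
  simp only [Integral, not_or, not_le] at htz
  obtain ⟨htz0, htzv⟩ := htz
  refine ⟨(t * (Algebra.trace K L z)⁻¹) • z, ?_, ?_⟩
  · have hc : wK.ValGE (s + 1) (t * (Algebra.trace K L z)⁻¹) :=
      (ht.mul (valGE_v _)).mono (by rw [v_inv htz0]; omega)
    exact (htot.valGE_smul hc hz).mono (by linarith)
  · rw [map_smul, smul_eq_mul, inv_mul_cancel_right₀ htz0]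

theorem IsDifferentVal.exists_trace_eq_zero_v_eq {d : ℤ} (hd : IsDifferentVal wK wL d)
    (htot : IsRamificationIndex wK wL n) {m : ℤ} (hm : ¬ m ≡ -d - 1 [ZMOD n]) :
    ∃ x : L, Algebra.trace K L x = 0 ∧ x ≠ 0 ∧ wL.v x = m := by
  have hn : (0 : ℤ) < n := by exact_mod_cast htot.1
  have hdiv := Int.mul_ediv_add_emod (m + d) n
  have hr0 := Int.emod_nonneg (m + d) hn.ne'
  have hrn := Int.emod_lt_of_pos (m + d) hn
  have hr : (m + d) % n + 1 ≠ n := fun h =>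
    hm (Int.modEq_iff_dvd.mpr ⟨-((m + d) / n + 1), by linear_combination hdiv - h⟩)
  -- `m` and `m + 1` give the same `s = ⌊(m + d) / n⌋`
  have hup : m + 1 + d < n * ((m + d) / n + 1) := by
    rw [mul_add, mul_one]
    omega
  obtain ⟨x₀, hx₀, rfl⟩ := wL.v_surj m
  obtain ⟨y, hy, hyt⟩ := hd.exists_valGE_trace_eq htot hup
    (hd.valGE_trace htot (by omega) (valGE_v x₀))
  refine ⟨x₀ + -y, ?_, add_ne_zero_of_valGE hx₀ hy.neg, v_add_of_valGE hx₀ hy.neg⟩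
  rw [map_add, map_neg, hyt, add_neg_cancel]

theorem IsDifferentVal.not_modEq_of_trace_eq_zero {d : ℤ} (hd : IsDifferentVal wK wL d)
    (hn : n = Module.finrank K L) (htot : IsRamificationIndex wK wL n) {x : L} (hx : x ≠ 0)
    (htr : Algebra.trace K L x = 0) : ¬ wL.v x ≡ -d - 1 [ZMOD n] := by
  intro hmod
  obtain ⟨k, hk⟩ := Int.modEq_iff_dvd.mp hmod
  obtain ⟨c, hc0, hcv⟩ := wK.v_surj k
  have hcx : c • x ≠ 0 := smul_ne_zero hc0 hx
  have hcxv : wL.v (c • x) = -d - 1 := by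
    rw [htot.v_smul hc0 hx, hcv]
    linarith
  have htrace : ∀ z : L, wL.ValGE (-d - 1) z → wK.Integral (Algebra.trace K L z) := by
    intro z hz
    obtain ⟨b, hb⟩ := htot.exists_sub_smul_valGE hn hcx (hcxv ▸ hz)
    have := hd.integral_trace (by omega) hb
    rwa [map_sub, map_smul, map_smul, htr, smul_zero, smul_zero, sub_zero] at this
  have := (hd (-d - 1)).mp fun z hz => htrace z (or_iff_not_imp_left.mpr hz)
  omega

end Extension

end LocalFieldStruct

open LocalFieldStruct in
theorem statement5_general {K L : Type} [Field K] [Field L] [Algebra K L]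
    (wK : LocalFieldStruct K) (wL : LocalFieldStruct L)
    (n : ℕ) (hn : n = Module.finrank K L)
    (htot : IsRamificationIndex wK wL n)
    (d : ℤ) (hd : IsDifferentVal wK wL d) :
    {a : ZMod n | ∃ x : L, Algebra.trace K L x = 0 ∧ x ≠ 0 ∧
        ((wL.v x : ℤ) : ZMod n) = a} =
      {((-d - 1 : ℤ) : ZMod n)}ᶜ := by
  ext a
  obtain ⟨m, rfl⟩ := ZMod.intCast_surjective a
  simp only [Set.mem_ofPred_eq, Set.mem_compl_iff, Set.mem_singleton_iff,
    ZMod.intCast_eq_intCast_iff]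
  constructor
  · rintro ⟨x, htr, hx, hxm⟩ hm
    exact hd.not_modEq_of_trace_eq_zero hn htot hx htr (hxm.trans hm)
  · intro hm
    obtain ⟨x, htr, hx, hxm⟩ := hd.exists_trace_eq_zero_v_eq htot hm
    exact ⟨x, htr, hx, by rw [hxm]⟩

open LocalFieldStruct in
/-- Let `L/K` be a finite separable totally ramified extension of local fields
of degree `n`, and let `d̄ = (-d_{L/K} - 1 mod n)`.  Then the set of valuations
mod `n` of non-zero trace-zero elements of `L` is exactly `(ℤ/nℤ) \ {d̄}`. -/
theorem statement5 {K L : Type} [Field K] [Field L] [Algebra K L]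
    [FiniteDimensional K L] [Algebra.IsSeparable K L]
    (wK : LocalFieldStruct K) (wL : LocalFieldStruct L)
    (n : ℕ) (hn : n = Module.finrank K L)
    (htot : IsRamificationIndex wK wL n)
    (d : ℤ) (hd : IsDifferentVal wK wL d) :
    {a : ZMod n | ∃ x : L, Algebra.trace K L x = 0 ∧ x ≠ 0 ∧
        ((wL.v x : ℤ) : ZMod n) = a} =
      {((-d - 1 : ℤ) : ZMod n)}ᶜ :=
  statement5_general wK wL n hn htot d hd
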